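/- The equicontinuous uniform Laplace principle implies the Freidlin-Wentzell uniform upper bound, with no extra assumptions: under the EULP over $\mathscr{A}$, for all $A\in\mathscr{A}$, $s_0>0$, $\delta>0$, $\limsup_{\epsilon\to 0}\sup_{x\in A}\sup_{s\in[0,s_0]}\big(a(\epsilon)\log\mathbb{P}(\mathrm{dist}(X^\epsilon_x,\Phi_x(s))\ge\delta)+s\big)\le 0$. -/

import Mathlib

/-! For `x ∈ A` and `s ∈ [0, s₀]`, test the Laplace principle against `h = s • 1_C^δ`, the
`δ`-thickened indicator of the sublevel set `C = {I x ≤ s}` scaled by `s`. Since `h = s` on `C` and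
`I x > s` off `C`, `inf (h + I x) ≥ s`; since `h` vanishes where `dist(·, C) ≥ δ`,
`E exp(-h(X)/a) ≥ P(dist(X, C) ≥ δ)`. So `a log P(dist(X, C) ≥ δ) + s` is bounded by the Laplace
error at `h`. All these `h` are bounded by `s₀` and `s₀/δ`-Lipschitz, so the EULP sends that
error to `0` uniformly in `x` and `s`. -/

open MeasureTheory Filter Topology
open scoped ENNReal NNReal BoundedContinuousFunction

lemma EReal.le_coe_abs (x : EReal) : x ≤ x.abs := by
  induction x using EReal.rec with
  | bot => exact bot_le
  | coe x => rw [EReal.coe_abs]; exact_mod_cast le_abs_self x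
  | top => simp

lemma ENNReal.coe_mul_log_le_of_toReal_le {a r : ℝ} {p : ℝ≥0∞} (ha : 0 < a) (hp : p ≠ ⊤)
    (hpr : p.toReal ≤ r) : (a : EReal) * ENNReal.log p ≤ ((a * Real.log r : ℝ) : EReal) := by
  rcases eq_or_ne p 0 with rfl | hp0
  · simp [EReal.coe_mul_bot_of_pos ha]
  rw [ENNReal.log_pos_real hp0 hp, ← EReal.coe_mul, EReal.coe_le_coe_iff]
  gcongr
  exact ENNReal.toReal_pos hp0 hp

lemma limsup_le_zero_of_le_of_tendsto {β : Type*} {l : Filter β} [l.NeBot] {f : β → EReal}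
    {g : β → ℝ≥0∞} (hfg : ∀ᶠ b in l, f b ≤ g b) (hg : Tendsto g l (𝓝 0)) :
    limsup f l ≤ 0 := by
  have : Tendsto (fun b => (g b : EReal)) l (𝓝 0) :=
    (continuous_coe_ennreal_ereal.tendsto 0).comp hg
  calc limsup f l ≤ limsup (fun b => (g b : EReal)) l := limsup_le_limsup hfg
    _ = 0 := this.limsup_eq

lemma exists_forall_abs_sub_lt_of_lipschitzWith {α F : Type*} [PseudoMetricSpace α]
    [FunLike F α ℝ] {L : Set F} {K : ℝ≥0} (hL : ∀ h ∈ L, LipschitzWith K h) :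
    ∀ η > (0:ℝ), ∃ δ > (0:ℝ), ∀ h ∈ L, ∀ φ ψ : α, dist φ ψ < δ → |h φ - h ψ| < η := by
  intro η hη
  obtain ⟨δ, hδ, H⟩ := Metric.uniformEquicontinuous_iff.1
    (LipschitzWith.uniformEquicontinuous (fun h : L => ⇑(h : F)) K fun h => hL h h.2) η hη
  exact ⟨δ, hδ, fun h hh φ ψ hd => H φ ψ hd ⟨h, hh⟩⟩

section thickenedIndicator

variable {E : Type*} [PseudoMetricSpace E] {δ : ℝ}

-- Built from `infEDist` rather than `infDist`, so it vanishes identically when `C = ∅`.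
noncomputable def realThickenedIndicator (hδ : 0 < δ) (C : Set E) : E →ᵇ ℝ :=
  (thickenedIndicator hδ C).comp ((↑) : ℝ≥0 → ℝ) (LipschitzWith.subtype_val _)

@[simp]
lemma realThickenedIndicator_apply (hδ : 0 < δ) (C : Set E) (φ : E) :
    realThickenedIndicator hδ C φ = thickenedIndicator hδ C φ := rfl

lemma realThickenedIndicator_nonneg (hδ : 0 < δ) (C : Set E) (φ : E) :
    0 ≤ realThickenedIndicator hδ C φ := NNReal.coe_nonneg _

lemma norm_realThickenedIndicator_le (hδ : 0 < δ) (C : Set E) :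
    ‖realThickenedIndicator hδ C‖ ≤ 1 :=
  (BoundedContinuousFunction.norm_le zero_le_one).2 fun φ => by
    simpa [abs_of_nonneg] using thickenedIndicator_le_one hδ C φ

lemma lipschitzWith_realThickenedIndicator (hδ : 0 < δ) (C : Set E) :
    LipschitzWith δ.toNNReal⁻¹ (realThickenedIndicator hδ C) :=
  (LipschitzWith.subtype_val _).comp (lipschitzWith_thickenedIndicator hδ C) |>.weaken (by simp)

lemma smul_realThickenedIndicator_nonneg (hδ : 0 < δ) (C : Set E) {s : ℝ} (hs : 0 ≤ s) (φ : E) :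
    0 ≤ (s • realThickenedIndicator hδ C) φ :=
  mul_nonneg hs (realThickenedIndicator_nonneg hδ C φ)

lemma smul_realThickenedIndicator_of_mem (hδ : 0 < δ) {C : Set E} (s : ℝ) {φ : E} (hφ : φ ∈ C) :
    (s • realThickenedIndicator hδ C) φ = s := by
  simp [thickenedIndicator_one hδ C hφ]

lemma smul_realThickenedIndicator_of_le_infEDist (hδ : 0 < δ) {C : Set E} (s : ℝ) {φ : E}
    (hφ : ENNReal.ofReal δ ≤ Metric.infEDist φ C) :
    (s • realThickenedIndicator hδ C) φ = 0 := by
  have : φ ∉ Metric.thickening δ C := by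
    rw [Metric.mem_thickening_iff_infEDist_lt]; exact not_lt.2 hφ
  simp [thickenedIndicator_zero hδ C this]

def scaledThickenedIndicators (hδ : 0 < δ) (s₀ : ℝ) : Set (E →ᵇ ℝ) :=
  {h | ∃ s ∈ Set.Icc 0 s₀, ∃ C : Set E, h = s • realThickenedIndicator hδ C}

lemma norm_le_of_mem_scaledThickenedIndicators {hδ : 0 < δ} {s₀ : ℝ} {h : E →ᵇ ℝ}
    (hh : h ∈ scaledThickenedIndicators hδ s₀) : ‖h‖ ≤ s₀ := by
  obtain ⟨s, ⟨hs0, hss₀⟩, C, rfl⟩ := hh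
  calc ‖s • realThickenedIndicator hδ C‖ ≤ ‖s‖ * ‖realThickenedIndicator hδ C‖ := (norm_smul _ _).le
    _ ≤ s * 1 := by
      rw [Real.norm_of_nonneg hs0]; gcongr; exact norm_realThickenedIndicator_le hδ C
    _ ≤ s₀ := by linarith

lemma lipschitzWith_of_mem_scaledThickenedIndicators {hδ : 0 < δ} {s₀ : ℝ} {h : E →ᵇ ℝ}
    (hh : h ∈ scaledThickenedIndicators hδ s₀) : LipschitzWith (s₀.toNNReal * δ.toNNReal⁻¹) h := by
  obtain ⟨s, ⟨hs0, hss₀⟩, C, rfl⟩ := hh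
  refine ((lipschitzWith_smul s).comp (lipschitzWith_realThickenedIndicator hδ C)).weaken ?_
  gcongr
  rw [← NNReal.coe_le_coe, coe_nnnorm, Real.norm_of_nonneg hs0,
    Real.coe_toNNReal _ (hs0.trans hss₀)]
  exact hss₀

end thickenedIndicator

lemma mul_log_measure_le_mul_log_integral_exp {Ω : Type*} [MeasurableSpace Ω] (μ : Measure Ω)
    [IsFiniteMeasure μ] {a : ℝ} (ha : 0 < a) {f : Ω → ℝ} (hf : Measurable f) (hf0 : 0 ≤ f)
    {S : Set Ω} (hS : ∀ ω ∈ S, f ω = 0) :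
    (a : EReal) * ENNReal.log (μ S) ≤
      ((a * Real.log (∫ ω, Real.exp (-f ω / a) ∂μ) : ℝ) : EReal) := by
  refine ENNReal.coe_mul_log_le_of_toReal_le ha (measure_ne_top μ S) ?_
  have hle : ∀ ω, Real.exp (-f ω / a) ≤ 1 := fun ω =>
    Real.exp_le_one_iff.2 (div_nonpos_of_nonpos_of_nonneg (neg_nonpos.2 (hf0 ω)) ha.le)
  have hint : Integrable (fun ω => Real.exp (-f ω / a)) μ :=
    (integrable_const 1).mono'
      (Real.measurable_exp.comp (hf.neg.div_const a)).aestronglyMeasurable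
      (.of_forall fun ω => by simpa [abs_of_pos (Real.exp_pos _)] using hle ω)
  have hsub : S ⊆ {ω | 1 ≤ Real.exp (-f ω / a)} := fun ω hω => by simp [hS ω hω]
  calc μ.real S ≤ μ.real {ω | 1 ≤ Real.exp (-f ω / a)} := measureReal_mono hsub
    _ ≤ ∫ ω, Real.exp (-f ω / a) ∂μ := by
      simpa using mul_meas_ge_le_integral_of_nonneg (.of_forall fun ω => (Real.exp_pos _).le) hint 1

lemma coe_le_iInf_add_of_le_on_sublevel {E : Type*} {h : E → ℝ} {J : E → ℝ≥0∞} {s : ℝ}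
    (h0 : ∀ φ, 0 ≤ h φ) (hs : ∀ φ, J φ ≤ ENNReal.ofReal s → s ≤ h φ) :
    (s : EReal) ≤ ⨅ φ, ((h φ : EReal) + J φ) := by
  refine le_iInf fun φ => ?_
  by_cases hφ : J φ ≤ ENNReal.ofReal s
  · calc (s : EReal) ≤ h φ := EReal.coe_le_coe_iff.2 (hs φ hφ)
      _ ≤ h φ + J φ := le_add_of_nonneg_right (EReal.coe_ennreal_nonneg _)
  · calc (s : EReal) ≤ (ENNReal.ofReal s : EReal) := by
          rw [EReal.coe_ennreal_ofReal]; exact EReal.coe_le_coe_iff.2 (le_max_left s 0)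
      _ ≤ J φ := EReal.coe_ennreal_le_coe_ennreal_iff.2 (not_le.1 hφ).le
      _ ≤ h φ + J φ := le_add_of_nonneg_left (EReal.coe_nonneg.2 (h0 φ))

lemma mul_log_measure_add_le_of_smul_realThickenedIndicator {E Ω : Type*} [PseudoMetricSpace E]
    [MeasurableSpace E] [OpensMeasurableSpace E] [MeasurableSpace Ω] (μ : Measure Ω)
    [IsFiniteMeasure μ] {a : ℝ} (ha : 0 < a) {Y : Ω → E} (hY : Measurable Y) (J : E → ℝ≥0∞)
    {s δ : ℝ} (hs : 0 ≤ s) (hδ : 0 < δ) {C : Set E} (hC : {φ | J φ ≤ ENNReal.ofReal s} ⊆ C) :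
    (a : EReal) * ENNReal.log (μ {ω | ENNReal.ofReal δ ≤ Metric.infEDist (Y ω) C}) + s ≤
      ((a * Real.log (∫ ω, Real.exp (-(s • realThickenedIndicator hδ C) (Y ω) / a) ∂μ) : ℝ) : EReal)
        + ⨅ φ, (((s • realThickenedIndicator hδ C) φ : EReal) + J φ) :=
  add_le_add
    (mul_log_measure_le_mul_log_integral_exp μ ha
      ((s • realThickenedIndicator hδ C).continuous.measurable.comp hY)
      (fun ω => smul_realThickenedIndicator_nonneg hδ C hs (Y ω))
      (fun _ hω => smul_realThickenedIndicator_of_le_infEDist hδ s hω))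
    (coe_le_iInf_add_of_le_on_sublevel (smul_realThickenedIndicator_nonneg hδ C hs)
      (fun _ hφ => (smul_realThickenedIndicator_of_mem hδ s (hC hφ)).ge))

theorem eulp_implies_fw_uniform_upper_general
    {E : Type*} [MetricSpace E] [MeasurableSpace E] [BorelSpace E]
    {E0 : Type*} {Ω : Type*} [MeasurableSpace Ω] (μ : Measure Ω) [IsProbabilityMeasure μ]
    (X : ℝ → E0 → Ω → E) (hX : ∀ ε x, Measurable (X ε x))
    (a : ℝ → ℝ) (ha_pos : ∀ ε > 0, 0 < a ε)
    (I : E0 → E → ℝ≥0∞)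
    (𝒜 : Set (Set E0))
    -- the equicontinuous uniform Laplace principle over 𝒜
    (hEULP : ∀ A ∈ 𝒜, ∀ L : Set (E →ᵇ ℝ),
      (∃ M : ℝ, ∀ h ∈ L, ‖h‖ ≤ M) →
      (∀ η > (0:ℝ), ∃ δ > (0:ℝ), ∀ h ∈ L, ∀ φ ψ : E, dist φ ψ < δ → |h φ - h ψ| < η) →
      Tendsto (fun ε => ⨆ x ∈ A, ⨆ h ∈ L,
          EReal.abs (((a ε * Real.log (∫ ω, Real.exp (-(h (X ε x ω)) / a ε) ∂μ) : ℝ) : EReal)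
            + ⨅ φ, (((h φ : ℝ) : EReal) + (I x φ : EReal))))
        (𝓝[>] (0:ℝ)) (𝓝 (0 : ℝ≥0∞))) :
    -- the Freidlin-Wentzell uniform upper bound
    ∀ A ∈ 𝒜, ∀ s₀ > (0:ℝ), ∀ δ > (0:ℝ),
      Filter.limsup (fun ε =>
        ⨆ x ∈ A, ⨆ s ∈ Set.Icc (0:ℝ) s₀,
          ((a ε : EReal) * ENNReal.log
              (μ {ω | ENNReal.ofReal δ ≤
                  EMetric.infEdist (X ε x ω) {φ | I x φ ≤ ENNReal.ofReal s}})
            + (s : EReal))) (𝓝[>] (0:ℝ)) ≤ 0 := by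
  intro A hA s₀ _ δ hδ
  set L := scaledThickenedIndicators (E := E) hδ s₀
  have hLaplace := hEULP A hA L ⟨s₀, fun _ => norm_le_of_mem_scaledThickenedIndicators⟩
    (exists_forall_abs_sub_lt_of_lipschitzWith fun _ =>
      lipschitzWith_of_mem_scaledThickenedIndicators)
  refine limsup_le_zero_of_le_of_tendsto ?_ hLaplace
  filter_upwards [self_mem_nhdsWithin] with ε (hε : 0 < ε)
  refine iSup₂_le fun x hx => iSup₂_le fun s hs => ?_
  set C := {φ | I x φ ≤ ENNReal.ofReal s}
  have hL : s • realThickenedIndicator hδ C ∈ L := ⟨s, hs, C, rfl⟩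
  refine (mul_log_measure_add_le_of_smul_realThickenedIndicator μ (ha_pos ε hε) (hX ε x) (I x)
    hs.1 hδ subset_rfl).trans ((EReal.le_coe_abs _).trans ?_)
  exact EReal.coe_ennreal_le_coe_ennreal_iff.2 (le_iSup₂_of_le x hx (le_iSup₂_of_le _ hL le_rfl))

/-- With no extra assumptions, the equicontinuous uniform Laplace principle implies
the Freidlin-Wentzell uniform upper bound. -/
theorem eulp_implies_fw_uniform_upper
    {E : Type*} [MetricSpace E] [PolishSpace E] [MeasurableSpace E] [BorelSpace E]
    {E0 : Type*} {Ω : Type*} [MeasurableSpace Ω] (μ : Measure Ω) [IsProbabilityMeasure μ]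
    (X : ℝ → E0 → Ω → E) (hX : ∀ ε x, Measurable (X ε x))
    (a : ℝ → ℝ) (ha_pos : ∀ ε > 0, 0 < a ε)
    (ha : Tendsto a (𝓝[>] (0:ℝ)) (𝓝 0))
    (I : E0 → E → ℝ≥0∞) (hI : ∀ x, LowerSemicontinuous (I x))
    (𝒜 : Set (Set E0))
    -- the equicontinuous uniform Laplace principle over 𝒜
    (hEULP : ∀ A ∈ 𝒜, ∀ L : Set (E →ᵇ ℝ),
      (∃ M : ℝ, ∀ h ∈ L, ‖h‖ ≤ M) →
      (∀ η > (0:ℝ), ∃ δ > (0:ℝ), ∀ h ∈ L, ∀ φ ψ : E, dist φ ψ < δ → |h φ - h ψ| < η) →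
      Tendsto (fun ε => ⨆ x ∈ A, ⨆ h ∈ L,
          EReal.abs (((a ε * Real.log (∫ ω, Real.exp (-(h (X ε x ω)) / a ε) ∂μ) : ℝ) : EReal)
            + ⨅ φ, (((h φ : ℝ) : EReal) + (I x φ : EReal))))
        (𝓝[>] (0:ℝ)) (𝓝 (0 : ℝ≥0∞))) :
    -- the Freidlin-Wentzell uniform upper bound
    ∀ A ∈ 𝒜, ∀ s₀ > (0:ℝ), ∀ δ > (0:ℝ),
      Filter.limsup (fun ε =>
        ⨆ x ∈ A, ⨆ s ∈ Set.Icc (0:ℝ) s₀,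
          ((a ε : EReal) * ENNReal.log
              (μ {ω | ENNReal.ofReal δ ≤
                  EMetric.infEdist (X ε x ω) {φ | I x φ ≤ ENNReal.ofReal s}})
            + (s : EReal))) (𝓝[>] (0:ℝ)) ≤ 0 :=
  eulp_implies_fw_uniform_upper_general μ X hX a ha_pos I 𝒜 hEULP
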